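/- There is an absolute constant A > 0 such that for every θ ∈ [0,π], every γ ∈ (0, π/2], and every ε ∈ (0,1], there exists a real polynomial p with deg p ≤ ⌈A/(γ·ε)⌉ such that: (b) |p(cos φ)| ≤ ε for every φ ∈ [0,π] with φ ∉ [θ−2γ, θ+2γ]; (c) |p(cos φ) − 1| ≤ ε for every φ ∈ [θ−γ, θ+γ]; and (d) |p(cos φ)| ≤ 1+ε for every φ ∈ [0,π]. In other words, (O(1/(γε)), ε, θ, γ)-boxcar polynomials exist. -/

import Mathlib

/-!
Convolve the indicator of the arc `±[θ - 3γ/2, θ + 3γ/2]` with the Fejér kernel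
`F_m(t) = (1/m) |∑_{k<m} e^{ikt}|² = (1/m) ∑_{j,k<m} cos((j - k) t)`, normalised by `2π`.
Since `F_m` is a nonnegative cosine polynomial of degree `< m` with mass `2π` per period, the
result is `p(cos φ)` for a polynomial `p` of degree `≤ m` with values in `[0, 1]`. The geometric
sum gives `F_m(t) ≤ 1 / (m sin²(t/2))`, whose integral away from `0` is controlled by `cot`:
the mass of `F_m` at distance `≥ γ/2` from `0` is `O(1/(mγ))`. So `p(cos φ)` is `O(1/(mγ))`-close
to `0` at distance `≥ γ/2` from the arc and to `1` at distance `≥ γ/2` inside it, and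
`m ≈ 12/(γε)` suffices.
-/

open Real Finset Polynomial Polynomial.Chebyshev intervalIntegral

lemma sum_sum_cos_sub_mul (s : Finset ℕ) (t : ℝ) :
    ∑ j ∈ s, ∑ k ∈ s, cos (((j : ℝ) - k) * t) =
      (∑ k ∈ s, cos (k * t)) ^ 2 + (∑ k ∈ s, sin (k * t)) ^ 2 := by
  simp only [sq, sum_mul_sum, ← sum_add_distrib, sub_mul, cos_sub]

lemma sq_sum_cos_add_sq_sum_sin_le (m : ℕ) {t : ℝ} (ht : sin (t / 2) ≠ 0) :
    (∑ k ∈ range m, cos (k * t)) ^ 2 + (∑ k ∈ range m, sin (k * t)) ^ 2 ≤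
      (sin (t / 2) ^ 2)⁻¹ := by
  set z : ℂ := Complex.exp (t * Complex.I)
  have hz : ‖z‖ = 1 := Complex.norm_exp_ofReal_mul_I t
  have hz_sub : ‖z - 1‖ = 2 * |sin (t / 2)| := by
    rw [show z = Complex.exp (Complex.I * t) by rw [mul_comm],
      Complex.norm_exp_I_mul_ofReal_sub_one, norm_mul, Real.norm_two, Real.norm_eq_abs]
  have hz_ne : z ≠ 1 := by
    rw [← sub_ne_zero, ← norm_ne_zero_iff, hz_sub]; positivity
  have hnorm : (∑ k ∈ range m, cos (k * t)) ^ 2 + (∑ k ∈ range m, sin (k * t)) ^ 2 =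
      ‖∑ k ∈ range m, z ^ k‖ ^ 2 := by
    have hpow (k : ℕ) : z ^ k = Complex.exp ((k * t : ℝ) * Complex.I) := by
      rw [← Complex.exp_nat_mul]; push_cast; ring_nf
    rw [Complex.sq_norm, Complex.normSq_apply, Complex.re_sum, Complex.im_sum, sq, sq]
    simp only [hpow, Complex.exp_ofReal_mul_I_re, Complex.exp_ofReal_mul_I_im]
  have hgeom : ‖∑ k ∈ range m, z ^ k‖ ≤ 1 / |sin (t / 2)| := by
    rw [geom_sum_eq hz_ne, norm_div, hz_sub, div_le_div_iff₀ (by positivity) (by positivity)]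
    have : ‖z ^ m - 1‖ ≤ 2 := by
      simpa [norm_pow, hz, one_add_one_eq_two] using norm_sub_le (z ^ m) 1
    nlinarith [abs_nonneg (sin (t / 2))]
  rw [hnorm, ← sq_abs (sin _), ← inv_pow, ← one_div]
  gcongr

lemma two_div_pi_mul_le_sin {δ x : ℝ} (hδ : 0 ≤ δ) (h₁ : δ ≤ x) (h₂ : x ≤ π - δ) :
    2 / π * δ ≤ sin x := by
  rcases le_total x (π / 2) with hx | hx
  · exact (mul_le_mul_of_nonneg_left h₁ (by positivity)).trans (mul_le_sin (by linarith) hx)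
  · rw [← sin_pi_sub]
    exact (mul_le_mul_of_nonneg_left (by linarith) (by positivity)).trans
      (mul_le_sin (by linarith) (by linarith))

lemma abs_cos_div_sin_le {δ x : ℝ} (hδ : 0 < δ) (h₁ : δ ≤ x) (h₂ : x ≤ π - δ) :
    |cos x / sin x| ≤ π / (2 * δ) := by
  have hsin := two_div_pi_mul_le_sin hδ.le h₁ h₂
  have hsin_pos : 0 < sin x := lt_of_lt_of_le (by positivity) hsin
  rw [abs_div, abs_of_pos hsin_pos, div_le_div_iff₀ hsin_pos (by positivity)]
  calc |cos x| * (2 * δ) ≤ 1 * (2 * δ) := by gcongr; exact abs_cos_le_one x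
    _ = π * (2 / π * δ) := by field_simp
    _ ≤ π * sin x := by gcongr

lemma intervalIntegrable_inv_sq_sin_half {a b : ℝ} (ha : 0 < a) (hab : a ≤ b) (hb : b < 2 * π) :
    IntervalIntegrable (fun t => (sin (t / 2) ^ 2)⁻¹) MeasureTheory.volume a b := by
  refine ContinuousOn.intervalIntegrable (ContinuousOn.inv₀ (by fun_prop) fun t ht => ?_)
  rw [Set.uIcc_of_le hab] at ht
  exact pow_ne_zero 2 (sin_pos_of_pos_of_lt_pi (by linarith [ht.1]) (by linarith [ht.2])).ne'

lemma integral_inv_sq_sin_half {a b : ℝ} (ha : 0 < a) (hab : a ≤ b) (hb : b < 2 * π) :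
    ∫ t in a..b, (sin (t / 2) ^ 2)⁻¹ =
      2 * (cos (a / 2) / sin (a / 2) - cos (b / 2) / sin (b / 2)) := by
  rw [integral_eq_sub_of_hasDerivAt (f := fun t => -2 * (cos (t / 2) / sin (t / 2))) ?_
    (intervalIntegrable_inv_sq_sin_half ha hab hb)]
  · ring
  · intro t ht
    rw [Set.uIcc_of_le hab] at ht
    have hsin : sin (t / 2) ≠ 0 :=
      (sin_pos_of_pos_of_lt_pi (by linarith [ht.1]) (by linarith [ht.2])).ne'
    have hhalf := (hasDerivAt_id' t).div_const 2
    refine ((hhalf.cos.div hhalf.sin hsin).const_mul (-2)).congr_deriv ?_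
    field_simp
    linear_combination sin_sq_add_cos_sq (t / 2)

lemma integral_cos_int_mul (n : ℤ) :
    ∫ t in -π..π, cos (n * t) = if n = 0 then 2 * π else 0 := by
  split_ifs with hn
  · simp only [hn, Int.cast_zero, zero_mul, cos_zero, integral_const, sub_neg_eq_add, smul_eq_mul,
      mul_one]
    ring
  · have hn' : (n : ℝ) ≠ 0 := by exact_mod_cast hn
    rw [integral_comp_mul_left (fun x => cos x) hn', integral_cos, mul_neg, sin_neg,
      sin_int_mul_pi]
    simp

lemma integral_sum_sum_div {f : ℕ → ℕ → ℝ → ℝ} (hf : ∀ j k, Continuous (f j k))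
    (s : Finset ℕ) (c a b : ℝ) :
    ∫ t in a..b, (∑ j ∈ s, ∑ k ∈ s, f j k t) / c =
      (∑ j ∈ s, ∑ k ∈ s, ∫ t in a..b, f j k t) / c := by
  rw [intervalIntegral.integral_div, integral_finsetSum fun j _ =>
    (continuous_finsetSum _ fun k _ => hf j k).intervalIntegrable a b]
  simp only [integral_finsetSum fun k _ => (hf _ k).intervalIntegrable a b]

noncomputable def fejerKernel (m : ℕ) (t : ℝ) : ℝ :=
  (∑ j ∈ range m, ∑ k ∈ range m, cos (((j : ℝ) - k) * t)) / m

@[fun_prop]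
lemma continuous_fejerKernel (m : ℕ) : Continuous (fejerKernel m) := by
  unfold fejerKernel; fun_prop

namespace fejerKernel

variable {m : ℕ}

lemma nonneg (m : ℕ) (t : ℝ) : 0 ≤ fejerKernel m t := by
  rw [fejerKernel, sum_sum_cos_sub_mul]; positivity

lemma le_inv_sq_sin_half_div (m : ℕ) {t : ℝ} (ht : sin (t / 2) ≠ 0) :
    fejerKernel m t ≤ (sin (t / 2) ^ 2)⁻¹ / m := by
  rw [fejerKernel, sum_sum_cos_sub_mul]
  exact div_le_div_of_nonneg_right (sq_sum_cos_add_sq_sum_sin_le m ht) m.cast_nonneg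

lemma neg (m : ℕ) (t : ℝ) : fejerKernel m (-t) = fejerKernel m t := by
  simp only [fejerKernel, mul_neg, cos_neg]

lemma periodic (m : ℕ) : Function.Periodic (fejerKernel m) (2 * π) := by
  intro t
  have h (j k : ℕ) :
      ((j : ℝ) - k) * (t + 2 * π) = ((j : ℝ) - k) * t + ((j - k : ℤ) : ℝ) * (2 * π) := by
    push_cast; ring
  simp only [fejerKernel, h, cos_add_int_mul_two_pi]

lemma integral_neg_pi_pi (hm : 0 < m) : ∫ t in -π..π, fejerKernel m t = 2 * π := by
  have h (j k : ℕ) : ∫ t in -π..π, cos (((j : ℝ) - k) * t) = if j = k then 2 * π else 0 := by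
    have := integral_cos_int_mul (j - k)
    push_cast at this
    simp [this, sub_eq_zero]
  unfold fejerKernel
  rw [integral_sum_sum_div (fun j k => by fun_prop)]
  simp only [h, sum_ite_eq, mem_range]
  rw [sum_congr rfl fun j hj => if_pos (mem_range.1 hj), sum_const, card_range, nsmul_eq_mul]
  field_simp

lemma integral_period (hm : 0 < m) (φ : ℝ) :
    ∫ t in φ - π..φ + π, fejerKernel m t = 2 * π := by
  have h := (periodic m).intervalIntegral_add_eq (φ - π) (-π)
  rwa [show φ - π + 2 * π = φ + π by ring, show -π + 2 * π = π by ring,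
    integral_neg_pi_pi hm] at h

lemma integral_le {γ a b : ℝ} (hγ : 0 < γ) (ha : γ / 2 ≤ a) (hab : a ≤ b)
    (hb : b ≤ 2 * π - γ / 2) : ∫ t in a..b, fejerKernel m t ≤ 8 * π / (m * γ) := by
  have hcot (x : ℝ) (hx₁ : a ≤ x) (hx₂ : x ≤ b) : |cos (x / 2) / sin (x / 2)| ≤ 2 * π / γ := by
    have := abs_cos_div_sin_le (δ := γ / 4) (x := x / 2) (by positivity) (by linarith)
      (by linarith)
    rwa [show π / (2 * (γ / 4)) = 2 * π / γ by ring] at this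
  calc ∫ t in a..b, fejerKernel m t ≤ ∫ t in a..b, (sin (t / 2) ^ 2)⁻¹ / m := by
        refine integral_mono_on hab ((continuous_fejerKernel m).intervalIntegrable a b)
          ((intervalIntegrable_inv_sq_sin_half (by linarith) hab (by linarith)).div_const _)
          fun t ht => le_inv_sq_sin_half_div m ?_
        exact (sin_pos_of_pos_of_lt_pi (by linarith [ht.1]) (by linarith [ht.2])).ne'
    _ = 2 * (cos (a / 2) / sin (a / 2) - cos (b / 2) / sin (b / 2)) / m := by
        rw [intervalIntegral.integral_div,
          integral_inv_sq_sin_half (by linarith) hab (by linarith)]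
    _ ≤ 2 * (2 * π / γ + 2 * π / γ) / m := by
        gcongr
        linarith [abs_le.1 (hcot a le_rfl hab), abs_le.1 (hcot b hab le_rfl)]
    _ = 8 * π / (m * γ) := by ring

lemma integral_le_of_nonpos {γ a b : ℝ} (hγ : 0 < γ) (ha : γ / 2 - 2 * π ≤ a) (hab : a ≤ b)
    (hb : b ≤ -(γ / 2)) : ∫ t in a..b, fejerKernel m t ≤ 8 * π / (m * γ) := by
  rw [← neg_neg a, ← neg_neg b, ← integral_comp_neg]
  simp only [neg m]
  exact integral_le hγ (by linarith) (by linarith) (by linarith)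

lemma sub_add_add (m : ℕ) (φ u : ℝ) :
    fejerKernel m (φ - u) + fejerKernel m (φ + u) =
      (∑ j ∈ range m, ∑ k ∈ range m,
        2 * cos (((j : ℝ) - k) * φ) * cos (((j : ℝ) - k) * u)) / m := by
  rw [fejerKernel, fejerKernel, ← add_div, ← sum_add_distrib]
  congr 1
  refine sum_congr rfl fun j _ => ?_
  rw [← sum_add_distrib]
  refine sum_congr rfl fun k _ => ?_
  rw [mul_sub, mul_add, cos_sub, cos_add]
  ring

end fejerKernel

/-- `(fejerBoxcar m l r).eval (cos φ)` is the Fejér mean of the indicator of `±[l, r]` at `φ`. -/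
noncomputable def fejerBoxcar (m : ℕ) (l r : ℝ) : ℝ[X] :=
  ∑ j ∈ range m, ∑ k ∈ range m,
    C ((∫ u in l..r, cos (((j : ℝ) - k) * u)) / (π * m)) * T ℝ ((j : ℤ) - k)

namespace fejerBoxcar

variable {m : ℕ} {l r : ℝ}

lemma natDegree_le (m : ℕ) (l r : ℝ) : (fejerBoxcar m l r).natDegree ≤ m := by
  refine natDegree_sum_le_of_forall_le _ _ fun j hj =>
    natDegree_sum_le_of_forall_le _ _ fun k hk => (natDegree_C_mul_le _ _).trans ?_
  rw [natDegree_T]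
  rw [mem_range] at hj hk
  omega

lemma eval_cos (m : ℕ) (l r φ : ℝ) :
    (fejerBoxcar m l r).eval (cos φ) =
      ((∫ t in φ - r..φ - l, fejerKernel m t) + ∫ t in φ + l..φ + r, fejerKernel m t) /
        (2 * π) := by
  rw [← integral_comp_sub_left, ← integral_comp_add_left,
    ← integral_add ((by fun_prop : Continuous _).intervalIntegrable _ _)
      ((by fun_prop : Continuous _).intervalIntegrable _ _)]
  simp only [fejerKernel.sub_add_add]
  rw [integral_sum_sum_div (fun j k => by fun_prop)]
  simp only [fejerBoxcar, eval_finsetSum, eval_mul, eval_C, T_real_cos, integral_const_mul,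
    sum_div]
  refine sum_congr rfl fun j _ => sum_congr rfl fun k _ => ?_
  push_cast
  field_simp

lemma integral_add_integral_compl (hm : 0 < m) (φ : ℝ) :
    ((∫ t in φ - r..φ - l, fejerKernel m t) + ∫ t in φ + l..φ + r, fejerKernel m t) +
      ((∫ t in φ - π..φ - r, fejerKernel m t) + (∫ t in φ - l..φ + l, fejerKernel m t) +
        ∫ t in φ + r..φ + π, fejerKernel m t) = 2 * π := by
  have hint (a b : ℝ) :=
    (continuous_fejerKernel m).intervalIntegrable (μ := MeasureTheory.volume) a b
  have h₁ := integral_add_adjacent_intervals (hint (φ - π) (φ - r)) (hint _ (φ - l))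
  have h₂ := integral_add_adjacent_intervals (hint (φ - π) (φ - l)) (hint _ (φ + l))
  have h₃ := integral_add_adjacent_intervals (hint (φ - π) (φ + l)) (hint _ (φ + r))
  have h₄ := integral_add_adjacent_intervals (hint (φ - π) (φ + r)) (hint _ (φ + π))
  linarith [fejerKernel.integral_period hm φ]

lemma eval_cos_mem_Icc (hm : 0 < m) (hl : 0 ≤ l) (hlr : l ≤ r) (hr : r ≤ π) (φ : ℝ) :
    (fejerBoxcar m l r).eval (cos φ) ∈ Set.Icc 0 1 := by
  have hnonneg {a b : ℝ} (hab : a ≤ b) : 0 ≤ ∫ t in a..b, fejerKernel m t :=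
    integral_nonneg hab fun t _ => fejerKernel.nonneg m t
  have h₁ := hnonneg (a := φ - r) (b := φ - l) (by linarith)
  have h₂ := hnonneg (a := φ + l) (b := φ + r) (by linarith)
  have h₃ := hnonneg (a := φ - π) (b := φ - r) (by linarith)
  have h₄ := hnonneg (a := φ - l) (b := φ + l) (by linarith)
  have h₅ := hnonneg (a := φ + r) (b := φ + π) (by linarith)
  have := integral_add_integral_compl (l := l) (r := r) hm φ
  rw [eval_cos, Set.mem_Icc, le_div_iff₀ (by positivity), div_le_one (by positivity)]
  constructor <;> linarith

lemma eval_cos_le (hl : 0 ≤ l) (hlr : l ≤ r) (hr : r ≤ π) {γ φ : ℝ} (hγ : 0 < γ)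
    (hφ : φ ∈ Set.Icc 0 π) (hφlr : φ + γ / 2 ≤ l ∨ r + γ / 2 ≤ φ) :
    (fejerBoxcar m l r).eval (cos φ) ≤ 8 / (m * γ) := by
  obtain ⟨hφ₀, hφπ⟩ := hφ
  have h₁ : ∫ t in φ - r..φ - l, fejerKernel m t ≤ 8 * π / (m * γ) := by
    rcases hφlr with h | h
    · exact fejerKernel.integral_le_of_nonpos hγ (by linarith) (by linarith) (by linarith)
    · exact fejerKernel.integral_le hγ (by linarith) (by linarith) (by linarith)
  have h₂ : ∫ t in φ + l..φ + r, fejerKernel m t ≤ 8 * π / (m * γ) :=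
    fejerKernel.integral_le hγ (by rcases hφlr with h | h <;> linarith) (by linarith)
      (by rcases hφlr with h | h <;> linarith)
  rw [eval_cos, div_le_iff₀ (by positivity)]
  calc _ ≤ 8 * π / (m * γ) + 8 * π / (m * γ) := add_le_add h₁ h₂
    _ = 8 / (m * γ) * (2 * π) := by ring

lemma one_sub_le_eval_cos (hm : 0 < m) (hl : 0 ≤ l) (hr : r ≤ π) {γ φ : ℝ}
    (hγ : 0 < γ) (hφ : φ ∈ Set.Icc 0 π) (hlφ : l = 0 ∨ l + γ / 2 ≤ φ)
    (hφr : r = π ∨ φ + γ / 2 ≤ r) :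
    1 - 12 / (m * γ) ≤ (fejerBoxcar m l r).eval (cos φ) := by
  obtain ⟨hφ₀, hφπ⟩ := hφ
  have hB : 0 ≤ 8 * π / (m * γ) := by positivity
  have h₁ : ∫ t in φ - π..φ - r, fejerKernel m t ≤ 8 * π / (m * γ) := by
    rcases hφr with rfl | h
    · rwa [integral_same]
    · exact fejerKernel.integral_le_of_nonpos hγ (by linarith) (by linarith) (by linarith)
  have h₂ : ∫ t in φ - l..φ + l, fejerKernel m t ≤ 8 * π / (m * γ) := by
    rcases hlφ with rfl | h
    · rwa [sub_zero, add_zero, integral_same]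
    · exact fejerKernel.integral_le hγ (by linarith) (by linarith) (by linarith)
  have h₃ : ∫ t in φ + r..φ + π, fejerKernel m t ≤ 8 * π / (m * γ) := by
    rcases hφr with rfl | h
    · rwa [integral_same]
    · exact fejerKernel.integral_le hγ (by linarith) (by linarith) (by linarith)
  have := integral_add_integral_compl (l := l) (r := r) hm φ
  rw [eval_cos, le_div_iff₀ (by positivity)]
  calc (1 - 12 / (m * γ)) * (2 * π) = 2 * π - 3 * (8 * π / (m * γ)) := by ring
    _ ≤ _ := by linarith

end fejerBoxcar

lemma exists_mem_Icc_cos_eq {θ γ φ : ℝ} (hθ : θ ∈ Set.Icc 0 π) (hγ : γ ≤ π)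
    (hφ : φ ∈ Set.Icc (θ - γ) (θ + γ)) :
    ∃ ψ ∈ Set.Icc 0 π, ψ ∈ Set.Icc (θ - γ) (θ + γ) ∧ cos ψ = cos φ := by
  obtain ⟨hθ₀, hθπ⟩ := hθ
  obtain ⟨hφ₁, hφ₂⟩ := hφ
  rcases lt_or_ge φ 0 with h₀ | h₀
  · exact ⟨-φ, ⟨by linarith, by linarith⟩, ⟨by linarith, by linarith⟩, cos_neg φ⟩
  rcases le_or_gt φ π with hπ | hπ
  · exact ⟨φ, ⟨h₀, hπ⟩, ⟨hφ₁, hφ₂⟩, rfl⟩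
  · exact ⟨2 * π - φ, ⟨by linarith, by linarith⟩, ⟨by linarith, by linarith⟩, cos_two_pi_sub φ⟩

noncomputable def boxcarPolynomial (m : ℕ) (θ γ : ℝ) : ℝ[X] :=
  fejerBoxcar m (max 0 (θ - 3 * γ / 2)) (min π (θ + 3 * γ / 2))

namespace boxcarPolynomial

variable {m : ℕ} {θ γ : ℝ}

lemma window_le (hθ : θ ∈ Set.Icc 0 π) (hγ : 0 ≤ γ) :
    max 0 (θ - 3 * γ / 2) ≤ min π (θ + 3 * γ / 2) :=
  max_le (le_min pi_pos.le (by linarith [hθ.1])) (le_min (by linarith [hθ.2]) (by linarith))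

lemma eval_cos_mem_Icc (hm : 0 < m) (hθ : θ ∈ Set.Icc 0 π) (hγ : 0 ≤ γ) (φ : ℝ) :
    (boxcarPolynomial m θ γ).eval (cos φ) ∈ Set.Icc 0 1 :=
  fejerBoxcar.eval_cos_mem_Icc hm (le_max_left _ _) (window_le hθ hγ) (min_le_left _ _) φ

lemma eval_cos_le (hθ : θ ∈ Set.Icc 0 π) (hγ : 0 < γ) {φ : ℝ} (hφ : φ ∈ Set.Icc 0 π)
    (hφθ : φ ∉ Set.Icc (θ - 2 * γ) (θ + 2 * γ)) :
    (boxcarPolynomial m θ γ).eval (cos φ) ≤ 8 / (m * γ) := by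
  refine fejerBoxcar.eval_cos_le (le_max_left _ _) (window_le hθ hγ.le) (min_le_left _ _) hγ hφ ?_
  rw [Set.mem_Icc, not_and_or, not_le, not_le] at hφθ
  rcases hφθ with h | h
  · exact .inl (by linarith [le_max_right 0 (θ - 3 * γ / 2)])
  · exact .inr (by linarith [min_le_right π (θ + 3 * γ / 2)])

lemma one_sub_le_eval_cos (hm : 0 < m) (hθ : θ ∈ Set.Icc 0 π) (hγ : 0 < γ) (hγπ : γ ≤ π)
    {φ : ℝ} (hφ : φ ∈ Set.Icc (θ - γ) (θ + γ)) :
    1 - 12 / (m * γ) ≤ (boxcarPolynomial m θ γ).eval (cos φ) := by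
  obtain ⟨ψ, hψ, hψθ, hcos⟩ := exists_mem_Icc_cos_eq hθ hγπ hφ
  rw [← hcos]
  refine fejerBoxcar.one_sub_le_eval_cos hm (le_max_left _ _) (min_le_left _ _) hγ hψ ?_ ?_
  · rcases max_choice 0 (θ - 3 * γ / 2) with h | h
    · exact .inl h
    · exact .inr (by rw [h]; linarith [hψθ.1])
  · rcases min_choice π (θ + 3 * γ / 2) with h | h
    · exact .inl h
    · exact .inr (by rw [h]; linarith [hψθ.2])

end boxcarPolynomial

theorem stmt_1 :
    ∃ A : ℝ, 0 < A ∧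
      ∀ θ : ℝ, θ ∈ Set.Icc 0 Real.pi →
      ∀ γ : ℝ, γ ∈ Set.Ioc 0 (Real.pi / 2) →
      ∀ ε : ℝ, ε ∈ Set.Ioc (0 : ℝ) 1 →
      ∃ p : Polynomial ℝ, p.natDegree ≤ ⌈A / (γ * ε)⌉₊ ∧
        (∀ φ ∈ Set.Icc (0 : ℝ) Real.pi, φ ∉ Set.Icc (θ - 2 * γ) (θ + 2 * γ) →
          |p.eval (Real.cos φ)| ≤ ε) ∧
        (∀ φ ∈ Set.Icc (θ - γ) (θ + γ), |p.eval (Real.cos φ) - 1| ≤ ε) ∧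
        (∀ φ ∈ Set.Icc (0 : ℝ) Real.pi, |p.eval (Real.cos φ)| ≤ 1 + ε) := by
  refine ⟨12, by norm_num, fun θ hθ γ ⟨hγ, hγπ⟩ ε ⟨hε, _⟩ => ?_⟩
  set m := ⌈12 / (γ * ε)⌉₊
  have hm : 0 < m := Nat.ceil_pos.2 (by positivity)
  have hmγ : 12 / (m * γ) ≤ ε := by
    have := Nat.le_ceil (12 / (γ * ε))
    rw [div_le_iff₀ (by positivity)] at this ⊢
    linarith
  have hp := boxcarPolynomial.eval_cos_mem_Icc hm hθ hγ.le
  refine ⟨boxcarPolynomial m θ γ, fejerBoxcar.natDegree_le _ _ _, fun φ hφ hφθ => ?_,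
    fun φ hφ => ?_, fun φ _ => ?_⟩
  · rw [abs_of_nonneg (hp φ).1]
    calc _ ≤ 8 / (m * γ) := boxcarPolynomial.eval_cos_le hθ hγ hφ hφθ
      _ ≤ 12 / (m * γ) := by gcongr; norm_num
      _ ≤ ε := hmγ
  · have := boxcarPolynomial.one_sub_le_eval_cos hm hθ hγ (by linarith) hφ
    rw [abs_le]
    constructor <;> linarith [(hp φ).2]
  · rw [abs_le]
    constructor <;> linarith [(hp φ).1, (hp φ).2]
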